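/- Schnorr's lower bound: for every n ≥ 1, every DeMorgan circuit computing the parity function XOR_n has at least 3(n − 1) binary gates; that is, CC(XOR_n) ≥ 3(n − 1). -/

import Mathlib

/-!
Gate elimination (Schnorr). Call `f` fully sensitive if flipping any input flips `f`, as for
`XOR_n`; we show `3 * (n - 1) ≤ C.size` for every circuit `C` computing such an `f`, by induction
on `n`, and may take `C` of minimum size. Then no binary gate of `C` is constant or duplicates
another node. The first binary gate `p` reachable from the output therefore reads literals of two
different inputs `x i` and `x j`. A second binary gate `h` reads a literal of `x i`: otherwise,
fixing `x j` to the controlling value of `p` would make `f` independent of `x i`. Now fix `x i` so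
that `p` becomes constant. Then `p` and `h` have constant inputs, and so has the binary gate at
which a path from the (non-constant) output down to `p` first enters the constant nodes. These
three gates can be removed, leaving a circuit for a fully sensitive function of `n - 1` inputs.
-/

/-- A node (gate) of a DeMorgan circuit on `n` inputs: an input variable, a constant,
a negation of an earlier node, or a binary ∧/∨ of two earlier (ordered) nodes.
Nodes are referenced by their position in the gate list. -/
inductive Gate (n : ℕ) : Type
  | inp : Fin n → Gate n
  | const : Bool → Gate n
  | not : ℕ → Gate n
  | and : ℕ → ℕ → Gate n
  | or : ℕ → ℕ → Gate n
deriving DecidableEq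

/-- The (indices of the) nodes a gate reads from. -/
def Gate.refs {n : ℕ} : Gate n → List ℕ
  | .inp _ => []
  | .const _ => []
  | .not a => [a]
  | .and a b => [a, b]
  | .or a b => [a, b]

/-- A DeMorgan circuit on `n` inputs: a finite DAG of gates, presented as a list in
topological order (every gate only reads strictly earlier gates), with a designated
output node. -/
structure Circuit (n : ℕ) : Type where
  gates : List (Gate n)
  output : Fin gates.length
  wf : ∀ (i : ℕ) (g : Gate n), gates[i]? = some g → ∀ r ∈ g.refs, r < i

/-- Value of a single gate, given the values `acc` of all earlier gates. -/
def Gate.val {n : ℕ} (x : Fin n → Bool) (acc : List Bool) : Gate n → Bool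
  | .inp i => x i
  | .const b => b
  | .not a => !(acc.getD a false)
  | .and a b => acc.getD a false && acc.getD b false
  | .or a b => acc.getD a false || acc.getD b false

/-- The list of values of all gates of the circuit, in topological order. -/
def Circuit.evalList {n : ℕ} (C : Circuit n) (x : Fin n → Bool) : List Bool :=
  C.gates.foldl (fun acc g => acc ++ [g.val x acc]) []

/-- The Boolean value computed by the circuit: the value of its output node. -/
def Circuit.eval {n : ℕ} (C : Circuit n) (x : Fin n → Bool) : Bool :=
  (C.evalList x).getD C.output false

/-- A gate is costly when it is a binary (∧/∨) gate; ¬ gates and constants are free. -/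
def Gate.costly {n : ℕ} : Gate n → Bool
  | .and _ _ => true
  | .or _ _ => true
  | _ => false

/-- The size of a circuit: its number of binary (∧/∨) gates. -/
def Circuit.size {n : ℕ} (C : Circuit n) : ℕ := (C.gates.filter Gate.costly).length

/-- `C` computes the Boolean function `f`. -/
def Circuit.Computes {n : ℕ} (C : Circuit n) (f : (Fin n → Bool) → Bool) : Prop :=
  ∀ x, C.eval x = f x

/-- The DeMorgan circuit complexity of `f`: the minimum number of binary gates of a
DeMorgan circuit computing `f`. -/
noncomputable def CC (n : ℕ) (f : (Fin n → Bool) → Bool) : ℕ :=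
  sInf {s | ∃ C : Circuit n, C.Computes f ∧ C.size = s}

/-- The parity function `XOR_n(x) = (x_1 + ⋯ + x_n) mod 2`. -/
def XORf (n : ℕ) (x : Fin n → Bool) : Bool :=
  decide ((∑ i : Fin n, (if x i then 1 else 0)) % 2 = 1)

open Function Relation

theorem update_id_le {α : Type*} [Preorder α] [DecidableEq α] {p b : α} (hb : b ≤ p) (r : α) :
    update id p b r ≤ r := by
  rcases eq_or_ne r p with rfl | h <;> simp [*]

namespace Gate

variable {n m : ℕ}

/-- `Gate.val` with the values of the other nodes given as a function. -/
def eval (x : Fin n → Bool) (v : ℕ → Bool) : Gate n → Bool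
  | .inp i => x i
  | .const b => b
  | .not a => !v a
  | .and a b => v a && v b
  | .or a b => v a || v b

theorem val_eq_eval (x : Fin n → Bool) (acc : List Bool) (g : Gate n) :
    g.val x acc = g.eval x (acc.getD · false) := by
  cases g <;> rfl

theorem eval_congr {x : Fin n → Bool} {v v' : ℕ → Bool} {g : Gate n}
    (h : ∀ r ∈ g.refs, v r = v' r) : g.eval x v = g.eval x v' := by
  cases g <;> simp_all [eval, refs]

theorem eval_update_of_ne {x : Fin n → Bool} {i : Fin n} {g : Gate n} (h : g ≠ .inp i)
    (b : Bool) (v : ℕ → Bool) : g.eval (update x i b) v = g.eval x v := by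
  cases g with
  | inp j => exact update_of_ne (by rintro rfl; exact h rfl) _ _
  | _ => rfl

def mapRefs (f : ℕ → ℕ) : Gate n → Gate n
  | .not a => .not (f a)
  | .and a b => .and (f a) (f b)
  | .or a b => .or (f a) (f b)
  | g => g

@[simp] theorem refs_mapRefs (f : ℕ → ℕ) (g : Gate n) : (g.mapRefs f).refs = g.refs.map f := by
  cases g <;> rfl

@[simp] theorem costly_mapRefs (f : ℕ → ℕ) (g : Gate n) : (g.mapRefs f).costly = g.costly := by
  cases g <;> rfl

theorem eval_mapRefs (f : ℕ → ℕ) (x : Fin n → Bool) (v : ℕ → Bool) (g : Gate n) :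
    (g.mapRefs f).eval x v = g.eval x (v ∘ f) := by
  cases g <;> rfl

/-- Substitute the constant `c` for input `i` and renumber the remaining inputs. -/
def restrict (i : Fin (m + 1)) (c : Bool) : Gate (m + 1) → Gate m
  | .inp j => i.insertNth (α := fun _ => Gate m) (.const c) .inp j
  | .const b => .const b
  | .not a => .not a
  | .and a b => .and a b
  | .or a b => .or a b

@[simp] theorem refs_restrict (i : Fin (m + 1)) (c : Bool) (g : Gate (m + 1)) :
    (g.restrict i c).refs = g.refs := by
  cases g with
  | inp j => rcases i.eq_self_or_eq_succAbove j with rfl | ⟨k, rfl⟩ <;> simp [restrict, refs]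
  | _ => rfl

@[simp] theorem costly_restrict (i : Fin (m + 1)) (c : Bool) (g : Gate (m + 1)) :
    (g.restrict i c).costly = g.costly := by
  cases g with
  | inp j => rcases i.eq_self_or_eq_succAbove j with rfl | ⟨k, rfl⟩ <;> simp [restrict, costly]
  | _ => rfl

theorem eval_restrict (i : Fin (m + 1)) (c : Bool) (y : Fin m → Bool) (v : ℕ → Bool)
    (g : Gate (m + 1)) : (g.restrict i c).eval y v = g.eval (i.insertNth c y) v := by
  cases g with
  | inp j => rcases i.eq_self_or_eq_succAbove j with rfl | ⟨k, rfl⟩ <;> simp [restrict, eval]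
  | _ => rfl

end Gate

/-- The only such functions are `XOR_n` and its negation. -/
def FullySensitive {n : ℕ} (f : (Fin n → Bool) → Bool) : Prop :=
  ∀ x i, f (update x i (!x i)) = !f x

namespace FullySensitive

variable {n m : ℕ}

theorem ne_const {f : (Fin n → Bool) → Bool} (hf : FullySensitive f) (i : Fin n) (b : Bool) :
    ¬ ∀ x, f x = b := fun h => by
  simpa [h] using hf (fun _ => false) i

theorem ne_lit {f : (Fin n → Bool) → Bool} (hf : FullySensitive f) {i j : Fin n} (hij : i ≠ j)
    (s : Bool) : ¬ ∀ x, f x = xor s (x i) := fun h => by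
  simpa [h, update_of_ne hij] using hf (fun _ => false) j

theorem restrict {f : (Fin (m + 1) → Bool) → Bool} (hf : FullySensitive f) (i : Fin (m + 1))
    (c : Bool) : FullySensitive fun y => f (i.insertNth c y) := fun y k => by
  have hk : y k = i.insertNth (α := fun _ => Bool) c y (i.succAbove k) := by simp
  dsimp only
  rw [Fin.insertNth_update, hk, hf]

theorem apply_update {f : (Fin n → Bool) → Bool} (hf : FullySensitive f)
    (x : Fin n → Bool) (i : Fin n) (b : Bool) : f (update x i b) = xor (xor b (x i)) (f x) := by
  by_cases hb : b = x i
  · simp [hb]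
  · rw [Bool.eq_not_of_ne hb, hf]
    simp

end FullySensitive

theorem fullySensitive_XORf (n : ℕ) : FullySensitive (XORf n) := by
  intro x i
  have hsum : ∀ y : Fin n → Bool, (∑ j, if y j then 1 else 0) =
      (if y i then 1 else 0) + ∑ j ∈ Finset.univ.erase i, if y j then 1 else 0 := fun y =>
    (Finset.add_sum_erase _ _ (Finset.mem_univ i)).symm
  have hrest : ∑ j ∈ Finset.univ.erase i, (if update x i (!x i) j then 1 else 0) =
      ∑ j ∈ Finset.univ.erase i, if x j then 1 else 0 :=
    Finset.sum_congr rfl fun j hj => by rw [update_of_ne (Finset.ne_of_mem_erase hj)]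
  simp only [XORf, hsum (update x i _), hsum x, hrest, update_self]
  generalize ∑ j ∈ Finset.univ.erase i, (if x j then 1 else 0) = T
  cases x i <;> rcases Nat.mod_two_eq_zero_or_one T with h | h <;> simp [Nat.add_mod, h]

namespace Circuit

variable {n m : ℕ}

theorem prefix_foldl_evalStep (x : Fin n → Bool) (L : List (Gate n)) (acc : List Bool) :
    acc <+: L.foldl (fun acc g => acc ++ [g.val x acc]) acc := by
  induction L generalizing acc with
  | nil => exact List.prefix_refl acc
  | cons g L ih => exact (List.prefix_append _ _).trans (ih _)

theorem length_foldl_evalStep (x : Fin n → Bool) (L : List (Gate n)) (acc : List Bool) :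
    (L.foldl (fun acc g => acc ++ [g.val x acc]) acc).length = acc.length + L.length := by
  induction L generalizing acc with
  | nil => rfl
  | cons g L ih => simp [ih]; omega

/-- Value of node `q` on input `x`; `false` beyond the last node. -/
def val (C : Circuit n) (x : Fin n → Bool) (q : ℕ) : Bool :=
  (C.evalList x).getD q false

theorem eval_eq_val (C : Circuit n) (x : Fin n → Bool) : C.eval x = C.val x C.output := rfl

theorem size_eq_countP (C : Circuit n) : C.size = C.gates.countP Gate.costly :=
  List.countP_eq_length_filter.symm

@[simp] theorem length_evalList (C : Circuit n) (x : Fin n → Bool) :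
    (C.evalList x).length = C.gates.length := by
  simp [evalList, length_foldl_evalStep]

theorem val_of_length_le (C : Circuit n) (x : Fin n → Bool) {q : ℕ} (hq : C.gates.length ≤ q) :
    C.val x q = false := by
  rw [val, List.getD_eq_getElem?_getD, List.getElem?_eq_none (by simpa using hq), Option.getD_none]

theorem val_eq_eval (C : Circuit n) (x : Fin n → Bool) {q : ℕ} {g : Gate n}
    (hg : C.gates[q]? = some g) : C.val x q = g.eval x (C.val x) := by
  have hq : q < C.gates.length := (List.getElem?_eq_some_iff.1 hg).1
  set P := (C.gates.take q).foldl (fun acc g => acc ++ [g.val x acc]) []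
  have hP : P.length = q := by simp [P, length_foldl_evalStep, hq.le]
  obtain ⟨t, ht⟩ : P ++ [g.val x P] <+: C.evalList x := by
    have hsplit : C.gates = C.gates.take q ++ g :: C.gates.drop (q + 1) := by
      rw [← (List.getElem?_eq_some_iff.1 hg).2, List.getElem_cons_drop, List.take_append_drop]
    rw [evalList, hsplit, List.foldl_append, List.foldl_cons]
    exact prefix_foldl_evalStep _ _ _
  have hbelow : ∀ r < q, C.val x r = P.getD r false := fun r hr => by
    rw [val, ← ht, List.append_assoc, List.getD_append _ _ _ _ (by omega)]
  rw [val, ← ht, List.getD_append _ _ _ _ (by simp [hP]), List.getD_append_right _ _ _ _ hP.le,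
    hP, Nat.sub_self, List.getD_cons_zero, Gate.val_eq_eval]
  exact Gate.eval_congr fun r hr => (hbelow r (C.wf q g hg r hr)).symm

theorem val_eq_of_forall (C : Circuit n) {x : Fin n → Bool} {v : ℕ → Bool}
    (hv : ∀ q g, C.gates[q]? = some g → v q = g.eval x v) {q : ℕ} (hq : q < C.gates.length) :
    C.val x q = v q := by
  induction q using Nat.strong_induction_on with
  | _ q ih =>
    have hg : C.gates[q]? = some C.gates[q] := List.getElem?_eq_getElem hq
    rw [C.val_eq_eval x hg, hv q _ hg]
    exact Gate.eval_congr fun r hr =>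
      have := C.wf q _ hg r hr
      ih r this (this.trans hq)

def Reads (C : Circuit n) (q r : ℕ) : Prop := ∃ g ∈ C.gates[q]?, r ∈ g.refs

def Costly (C : Circuit n) (q : ℕ) : Prop := ∃ g ∈ C.gates[q]?, g.costly

def IsConst (C : Circuit n) (q : ℕ) : Prop := ∃ b, ∀ x, C.val x q = b

def Redundant (C : Circuit n) (p : ℕ) : Prop := C.IsConst p ∨ ∃ b < p, ∀ x, C.val x b = C.val x p

def Eliminable (C : Circuit n) (p : ℕ) : Prop := C.Costly p ∧ ∃ r, C.Reads p r ∧ C.IsConst r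

/-- Syntactic, not semantic: a literal reaches no binary gate (`IsLit.not_costly_of_reflTransGen`),
whereas a binary gate may well compute a literal. -/
inductive IsLit (C : Circuit n) (i : Fin n) : Bool → ℕ → Prop
  | inp {q : ℕ} : C.gates[q]? = some (.inp i) → C.IsLit i false q
  | not {q a : ℕ} {s : Bool} : C.gates[q]? = some (.not a) → C.IsLit i s a → C.IsLit i (!s) q

/-- `w` is the controlling value of the gate: `false` for `∧`, `true` for `∨`. -/
def IsBinary (C : Circuit n) (p a b : ℕ) (w : Bool) : Prop :=
  (∀ r, C.Reads p r ↔ r = a ∨ r = b) ∧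
    ∀ x, C.val x p = xor w (xor w (C.val x a) && xor w (C.val x b))

section

variable {C : Circuit n} {p q r a b : ℕ} {w s : Bool} {i : Fin n}

theorem Reads.lt (h : C.Reads q r) : r < q :=
  let ⟨g, hg, hr⟩ := h
  C.wf q g hg r hr

theorem le_of_reflTransGen (h : ReflTransGen C.Reads q r) : r ≤ q := by
  induction h with
  | refl => exact le_rfl
  | tail _ h ih => exact h.lt.le.trans ih

theorem Reads.isConst_of_not_costly (h : C.Reads q r) (hr : C.IsConst r) (hq : ¬ C.Costly q) :
    C.IsConst q := by
  obtain ⟨g, hg, hgr⟩ := h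
  obtain ⟨c, hc⟩ := hr
  cases g with
  | not a =>
    obtain rfl : r = a := by simpa [Gate.refs] using hgr
    exact ⟨!c, fun x => by rw [C.val_eq_eval x hg, Gate.eval, hc]⟩
  | inp | const => simp [Gate.refs] at hgr
  | and | or => exact absurd ⟨_, hg, rfl⟩ hq

theorem IsLit.val_eq (h : C.IsLit i s q) (x : Fin n → Bool) :
    C.val x q = xor s (x i) := by
  induction h with
  | inp hg => rw [C.val_eq_eval x hg]; simp [Gate.eval]
  | not hg _ ih => rw [C.val_eq_eval x hg, Gate.eval, ih, Bool.not_xor]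

theorem IsLit.not_costly (h : C.IsLit i s q) : ¬ C.Costly q := by
  rintro ⟨g, hg, hc⟩
  cases h with
  | inp h | not h => cases (Option.mem_def.1 hg).symm.trans h; simp [Gate.costly] at hc

theorem IsLit.exists_of_reads (h : C.IsLit i s q) (hr : C.Reads q r) :
    ∃ s', C.IsLit i s' r := by
  obtain ⟨g, hg, hgr⟩ := hr
  cases h with
  | inp h => cases (Option.mem_def.1 hg).symm.trans h; simp [Gate.refs] at hgr
  | not h ha =>
    cases (Option.mem_def.1 hg).symm.trans h
    obtain rfl : r = _ := by simpa [Gate.refs] using hgr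
    exact ⟨_, ha⟩

theorem IsLit.not_costly_of_reflTransGen (h : C.IsLit i s q)
    (hqr : ReflTransGen C.Reads q r) : ¬ C.Costly r := by
  obtain ⟨s', h'⟩ : ∃ s', C.IsLit i s' r := by
    induction hqr with
    | refl => exact ⟨s, h⟩
    | tail _ hbc ih => exact ih.elim fun _ hb => hb.exists_of_reads hbc
  exact h'.not_costly

theorem Costly.exists_isBinary (h : C.Costly p) : ∃ a b w, C.IsBinary p a b w := by
  obtain ⟨g, hg, hc⟩ := h
  have hreads : ∀ r, C.Reads p r ↔ r ∈ g.refs := fun r =>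
    ⟨fun ⟨g', hg', hr⟩ => by rwa [Option.mem_unique hg' hg] at hr, fun hr => ⟨g, hg, hr⟩⟩
  cases g with
  | inp | const | not => simp [Gate.costly] at hc
  | and a b =>
    refine ⟨a, b, false, fun r => by simp [hreads, Gate.refs], fun x => ?_⟩
    rw [C.val_eq_eval x hg]; simp [Gate.eval]
  | or a b =>
    refine ⟨a, b, true, fun r => by simp [hreads, Gate.refs], fun x => ?_⟩
    rw [C.val_eq_eval x hg, Gate.eval]; cases C.val x a <;> cases C.val x b <;> rfl

namespace IsBinary

theorem reads_left (h : C.IsBinary p a b w) : C.Reads p a := (h.1 a).2 (.inl rfl)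

theorem reads_right (h : C.IsBinary p a b w) : C.Reads p b := (h.1 b).2 (.inr rfl)

theorem symm (h : C.IsBinary p a b w) : C.IsBinary p b a w :=
  ⟨fun r => (h.1 r).trans or_comm, fun x => by rw [h.2, Bool.and_comm]⟩

theorem val_eq_of_val_left (h : C.IsBinary p a b w) {x : Fin n → Bool} (ha : C.val x a = w) :
    C.val x p = w := by
  simp [h.2, ha]

theorem isConst_of_isConst (h : C.IsBinary p a b w) (ha : C.IsConst a) (hb : C.IsConst b) :
    C.IsConst p := by
  obtain ⟨c, hc⟩ := ha
  obtain ⟨d, hd⟩ := hb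
  exact ⟨_, fun x => by rw [h.2, hc, hd]⟩

theorem redundant_of_isConst_left (h : C.IsBinary p a b w) (ha : C.IsConst a) :
    C.Redundant p := by
  obtain ⟨c, hc⟩ := ha
  by_cases hcw : c = w
  · exact .inl ⟨w, fun x => h.val_eq_of_val_left ((hc x).trans hcw)⟩
  · refine .inr ⟨b, h.reads_right.lt, fun x => ?_⟩
    rw [h.2, hc, Bool.eq_not_of_ne hcw]
    simp

theorem redundant_of_reads_isConst (h : C.IsBinary p a b w) (hr : C.Reads p r)
    (hc : C.IsConst r) : C.Redundant p := by
  rcases (h.1 r).1 hr with rfl | rfl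
  exacts [h.redundant_of_isConst_left hc, h.symm.redundant_of_isConst_left hc]

theorem redundant_of_isLit (h : C.IsBinary p a b w) {t : Bool}
    (ha : C.IsLit i s a) (hb : C.IsLit i t b) : C.Redundant p := by
  by_cases hst : s = t
  · refine .inr ⟨a, h.reads_left.lt, fun x => ?_⟩
    rw [h.2, ha.val_eq, hb.val_eq, hst, Bool.and_self]
    cases w <;> simp
  · refine .inl ⟨w, fun x => ?_⟩
    rw [h.2, ha.val_eq, hb.val_eq, Bool.eq_not_of_ne hst]
    cases w <;> cases t <;> cases x i <;> rfl

end IsBinary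

theorem Eliminable.redundant (h : C.Eliminable p) : C.Redundant p := by
  obtain ⟨hp, r, hpr, hr⟩ := h
  obtain ⟨a, b, w, hbin⟩ := hp.exists_isBinary
  exact hbin.redundant_of_reads_isConst hpr hr

/-- Gate `p` becomes the constant `v` and every read of `p` is redirected to `b`: for `b = p`
this replaces a constant gate by a constant, for `b < p` it bypasses `p` in favour of `b`. -/
def redirect (C : Circuit n) (p b : ℕ) (hb : b ≤ p) (v : Bool) : Circuit n where
  gates := (C.gates.map (Gate.mapRefs (update id p b))).set p (.const v)
  output := ⟨update id p b C.output, by simpa using (update_id_le hb _).trans_lt C.output.isLt⟩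
  wf q g hg r hr := by
    rw [List.getElem?_set] at hg
    split_ifs at hg with hpq
    · obtain rfl := Option.some.inj hg; simp [Gate.refs] at hr
    · obtain ⟨g₀, hg₀, rfl⟩ := Option.map_eq_some_iff.1 (by simpa using hg)
      obtain ⟨r₀, hr₀, rfl⟩ := List.mem_map.1 (by simpa using hr)
      exact (update_id_le hb r₀).trans_lt (C.wf q g₀ hg₀ r₀ hr₀)

variable {hb : b ≤ p} {v : Bool} {x : Fin n → Bool}

theorem gates_redirect_of_ne (hq : q ≠ p) :
    (C.redirect p b hb v).gates[q]? = C.gates[q]?.map (Gate.mapRefs (update id p b)) := by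
  simp [redirect, Ne.symm hq]

theorem size_redirect (hp : C.Costly p) : (C.redirect p b hb v).size + 1 = C.size := by
  obtain ⟨g, hg, hc⟩ := hp
  obtain ⟨hpl, rfl⟩ := List.getElem?_eq_some_iff.1 hg
  have hcomp : Gate.costly ∘ Gate.mapRefs (n := n) (update id p b) = Gate.costly :=
    funext (Gate.costly_mapRefs _)
  have hpos := List.countP_pos_iff.2 ⟨_, List.getElem_mem hpl, hc⟩
  rw [size_eq_countP, size_eq_countP, redirect, List.countP_set (by simpa using hpl),
    List.countP_map, hcomp]
  have hv : (Gate.const v : Gate n).costly = false := rfl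
  simp only [List.getElem_map, Gate.costly_mapRefs, hc, hv, ite_true, Bool.false_eq_true,
    ite_false]
  omega

theorem update_val_update_id (hv : update (C.val x) p v b = C.val x p) (r : ℕ) :
    update (C.val x) p v (update id p b r) = C.val x r := by
  rcases eq_or_ne r p with rfl | h
  · simpa using hv
  · simp [h]

theorem val_redirect (hv : update (C.val x) p v b = C.val x p) (hq : q < C.gates.length) :
    (C.redirect p b hb v).val x q = update (C.val x) p v q := by
  refine val_eq_of_forall _ (fun q' g hg => ?_) (by simpa [redirect] using hq)
  rcases eq_or_ne q' p with rfl | hqp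
  · have hpl : q' < C.gates.length := by simpa [redirect] using (List.getElem?_eq_some_iff.1 hg).1
    obtain rfl : Gate.const v = g := by simpa [redirect, List.getElem?_set, hpl] using hg
    simp [Gate.eval]
  · rw [gates_redirect_of_ne hqp] at hg
    obtain ⟨g₀, hg₀, rfl⟩ := Option.map_eq_some_iff.1 hg
    rw [update_of_ne hqp, C.val_eq_eval x hg₀, Gate.eval_mapRefs]
    exact Gate.eval_congr fun r _ => (update_val_update_id hv r).symm

theorem eval_redirect (hv : update (C.val x) p v b = C.val x p) :
    (C.redirect p b hb v).eval x = C.eval x := by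
  rw [eval_eq_val, eval_eq_val, ← update_val_update_id hv]
  exact val_redirect hv ((update_id_le hb _).trans_lt C.output.isLt)

theorem Eliminable.redirect (hv : ∀ x, update (C.val x) p v b = C.val x p) (hq : q ≠ p)
    (h : C.Eliminable q) : (C.redirect p b hb v).Eliminable q := by
  obtain ⟨⟨g, hg, hc⟩, r, ⟨g', hg', hr⟩, c, hrc⟩ := h
  rw [Option.mem_unique hg' hg] at hr
  have hg₁ : g.mapRefs (update id p b) ∈ (C.redirect p b hb v).gates[q]? := by
    simp [gates_redirect_of_ne hq, Option.mem_def.1 hg]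
  refine ⟨⟨_, hg₁, by rwa [Gate.costly_mapRefs]⟩, update id p b r,
    ⟨_, hg₁, by simpa using List.mem_map_of_mem hr⟩, c, fun x => ?_⟩
  have hrl : r < C.gates.length := (C.wf q g hg r hr).trans (List.getElem?_eq_some_iff.1 hg).1
  rw [val_redirect (hv x) ((update_id_le hb r).trans_lt hrl), update_val_update_id (hv x), hrc]

theorem Costly.exists_of_redundant (hp : C.Costly p) (hr : C.Redundant p) :
    ∃ D : Circuit n, (∀ x, D.eval x = C.eval x) ∧ D.size + 1 = C.size ∧
      ∀ q ≠ p, C.Eliminable q → D.Eliminable q := by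
  obtain ⟨b, hb, v, hv⟩ : ∃ b ≤ p, ∃ v, ∀ x, update (C.val x) p v b = C.val x p := by
    rcases hr with ⟨v, hv⟩ | ⟨b, hb, hv⟩
    · exact ⟨p, le_rfl, v, fun x => by simp [hv]⟩
    · exact ⟨b, hb.le, false, fun x => by simp [hb.ne, hv]⟩
  exact ⟨C.redirect p b hb v, fun x => eval_redirect (hv x), size_redirect hp,
    fun q hq h => h.redirect hv hq⟩

theorem exists_size_add_card_le (S : Finset ℕ) (hS : ∀ p ∈ S, C.Eliminable p) :
    ∃ D : Circuit n, (∀ x, D.eval x = C.eval x) ∧ D.size + S.card ≤ C.size := by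
  induction S using Finset.induction_on generalizing C with
  | empty => exact ⟨C, fun _ => rfl, le_rfl⟩
  | insert p S hpS ih =>
    have hp := hS p (Finset.mem_insert_self p S)
    obtain ⟨D, hD, hsize, helim⟩ := hp.1.exists_of_redundant hp.redundant
    obtain ⟨E, hE, hEsize⟩ := ih (C := D) fun q hq =>
      helim q (by rintro rfl; exact hpS hq) (hS q (Finset.mem_insert_of_mem hq))
    refine ⟨E, fun x => (hE x).trans (hD x), ?_⟩
    rw [Finset.card_insert_of_notMem hpS]
    omega

end

def restrict (C : Circuit (m + 1)) (i : Fin (m + 1)) (c : Bool) : Circuit m where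
  gates := C.gates.map (Gate.restrict i c)
  output := C.output.cast (by simp)
  wf q g hg r hr := by
    obtain ⟨g₀, hg₀, rfl⟩ := Option.map_eq_some_iff.1 (by simpa using hg)
    exact C.wf q g₀ hg₀ r (by simpa using hr)

section

variable (C : Circuit (m + 1)) (i : Fin (m + 1)) (c : Bool)

theorem reads_restrict : (C.restrict i c).Reads = C.Reads := by
  ext q r
  simp [Reads, restrict]

theorem costly_restrict : (C.restrict i c).Costly = C.Costly := by
  ext q
  simp [Costly, restrict]

theorem size_restrict : (C.restrict i c).size = C.size := by
  simp [size_eq_countP, restrict, List.countP_map, Function.comp_def]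

theorem val_restrict (y : Fin m → Bool) (q : ℕ) :
    (C.restrict i c).val y q = C.val (i.insertNth c y) q := by
  rcases lt_or_ge q C.gates.length with hq | hq
  · refine val_eq_of_forall _ (fun q' g hg => ?_) (by simpa [restrict] using hq)
    obtain ⟨g₀, hg₀, rfl⟩ := Option.map_eq_some_iff.1 (by simpa [restrict] using hg)
    rw [Gate.eval_restrict, C.val_eq_eval _ hg₀]
  · rw [val_of_length_le _ _ (by simpa [restrict] using hq), val_of_length_le _ _ hq]

theorem eval_restrict (y : Fin m → Bool) :
    (C.restrict i c).eval y = C.eval (i.insertNth c y) :=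
  C.val_restrict i c y C.output

end

section

variable {C : Circuit n} {f : (Fin n → Bool) → Bool}

theorem isConst_or_isLit_of_forall_not_costly {q : ℕ}
    (h : ∀ r, ReflTransGen C.Reads q r → ¬ C.Costly r) : C.IsConst q ∨ ∃ i s, C.IsLit i s q := by
  induction q using Nat.strong_induction_on with
  | _ q ih =>
  rcases hg : C.gates[q]? with _ | g
  · exact .inl ⟨false, fun x => C.val_of_length_le x (List.getElem?_eq_none_iff.1 hg)⟩
  cases g with
  | inp i => exact .inr ⟨i, false, .inp hg⟩
  | const b => exact .inl ⟨b, fun x => C.val_eq_eval x hg⟩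
  | not a =>
    have hqa : C.Reads q a := ⟨_, hg, by simp [Gate.refs]⟩
    rcases ih a hqa.lt fun r hr => h r (.head hqa hr) with hc | ⟨i, s, hl⟩
    · exact .inl (hqa.isConst_of_not_costly hc (h q .refl))
    · exact .inr ⟨i, !s, .not hg hl⟩
  | and | or => exact absurd ⟨_, hg, rfl⟩ (h q .refl)

theorem exists_costly_forall_reads_isConst_or_isLit (hout : ¬ C.IsConst C.output)
    (hlit : ∀ i s, ¬ C.IsLit i s C.output) :
    ∃ p, ReflTransGen C.Reads C.output p ∧ C.Costly p ∧
      ∀ r, C.Reads p r → C.IsConst r ∨ ∃ i s, C.IsLit i s r := by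
  classical
  have hex : ∃ p, ReflTransGen C.Reads C.output p ∧ C.Costly p := by
    by_contra! h
    rcases isConst_or_isLit_of_forall_not_costly h with hc | ⟨i, s, hl⟩
    exacts [hout hc, hlit i s hl]
  obtain ⟨hreach, hp⟩ := Nat.find_spec hex
  refine ⟨_, hreach, hp, fun r hr => isConst_or_isLit_of_forall_not_costly fun r' hr' hc => ?_⟩
  exact Nat.find_min hex ((le_of_reflTransGen hr').trans_lt hr.lt) ⟨hreach.trans (.head hr hr'), hc⟩

theorem exists_costly_reads_isConst {u w : ℕ} (hu : ¬ C.IsConst u) (hw : C.IsConst w)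
    (h : ReflTransGen C.Reads u w) :
    ∃ k r, C.Costly k ∧ ¬ C.IsConst k ∧ C.Reads k r ∧ C.IsConst r ∧ ReflTransGen C.Reads r w := by
  induction h using ReflTransGen.head_induction_on with
  | refl => exact absurd hw hu
  | @head u v huv hvw ih =>
    by_cases hv : C.IsConst v
    · exact ⟨_, _, by_contra fun hc => hu (huv.isConst_of_not_costly hv hc), hu, huv, hv, hvw⟩
    · exact ih hv

/-- The last non-constant node on a path from the output down to the constant node `p` is a binary
gate with a constant input; it is not `h`, for then both inputs of `h` would be constant. -/
theorem exists_eliminable_ne_ne {p h r : ℕ} (hout : ¬ C.IsConst C.output)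
    (hreach : ReflTransGen C.Reads C.output p) (hp : C.IsConst p) (hhr : C.Reads h r)
    (hr : C.IsConst r) (hrp : ¬ ReflTransGen C.Reads r p) :
    ∃ t, C.Eliminable t ∧ t ≠ p ∧ t ≠ h := by
  obtain ⟨k, r', hk, hkc, hkr', hr', hr'p⟩ := exists_costly_reads_isConst hout hp hreach
  refine ⟨k, ⟨hk, r', hkr', hr'⟩, fun hkp => hkc (hkp ▸ hp), ?_⟩
  rintro rfl
  have hrr' : r ≠ r' := fun h => hrp (h ▸ hr'p)
  obtain ⟨a, b, w, hbin⟩ := hk.exists_isBinary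
  rcases (hbin.1 r).1 hhr with rfl | rfl <;> rcases (hbin.1 r').1 hkr' with rfl | rfl
  exacts [hrr' rfl, hkc (hbin.isConst_of_isConst hr hr'), hkc (hbin.isConst_of_isConst hr' hr),
    hrr' rfl]

theorem val_update_eq_of_forall_not_isLit {i : Fin n} {p : ℕ}
    (hno : ∀ h ≠ p, C.Costly h → ∀ r s, C.Reads h r → ¬ C.IsLit i s r) {x : Fin n → Bool}
    {b : Bool} (hp : C.val (update x i b) p = C.val x p) {q : ℕ} (hq : ∀ s, ¬ C.IsLit i s q) :
    C.val (update x i b) q = C.val x q := by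
  induction q using Nat.strong_induction_on with
  | _ q ih =>
  rcases eq_or_ne q p with rfl | hqp
  · exact hp
  rcases hg : C.gates[q]? with _ | g
  · have hq := List.getElem?_eq_none_iff.1 hg
    rw [val_of_length_le _ _ hq, val_of_length_le _ _ hq]
  have hgi : g ≠ .inp i := by rintro rfl; exact hq false (.inp hg)
  rw [C.val_eq_eval _ hg, C.val_eq_eval _ hg, Gate.eval_update_of_ne hgi]
  refine Gate.eval_congr fun r hr => ih r (C.wf q g hg r hr) fun s hs => ?_
  cases g with
  | inp | const => simp [Gate.refs] at hr
  | not a =>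
    obtain rfl : r = a := by simpa [Gate.refs] using hr
    exact hq (!s) (.not hg hs)
  | and | or => exact hno q hqp ⟨_, hg, rfl⟩ r s ⟨_, hg, hr⟩ hs

theorem Computes.not_isConst_output (hC : C.Computes f) (hf : FullySensitive f)
    (i : Fin n) : ¬ C.IsConst C.output := fun ⟨b, hb⟩ =>
  hf.ne_const i b fun x => (hC x).symm.trans (hb x)

theorem Computes.not_isLit_output (hC : C.Computes f) (hf : FullySensitive f)
    {i j : Fin n} (hij : i ≠ j) (s : Bool) : ¬ C.IsLit i s C.output := fun hs =>
  hf.ne_lit hij s fun x => (hC x).symm.trans (hs.val_eq x)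

/-- Were `p` the only binary gate reading a literal of `x i`, then with `x j` fixed so that `b` is
controlling, `p` and hence every node that is not a literal of `x i` would ignore `x i`; so would
the output, contradicting sensitivity. -/
theorem exists_costly_reads_isLit (hf : FullySensitive f) (hC : C.Computes f) {p a b : ℕ}
    {w t : Bool} {i j : Fin n} (hbin : C.IsBinary p a b w) (hb : C.IsLit j t b) (hij : i ≠ j) :
    ∃ h ≠ p, C.Costly h ∧ ∃ r s, C.Reads h r ∧ C.IsLit i s r := by
  by_contra! hno
  set x : Fin n → Bool := update (fun _ => false) j (xor t w)
  have hpw : ∀ x' : Fin n → Bool, x' j = x j → C.val x' p = w := fun x' hx' =>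
    hbin.symm.val_eq_of_val_left (by simp [hb.val_eq, hx', x])
  have := val_update_eq_of_forall_not_isLit hno (b := !x i)
    ((hpw _ (update_of_ne hij.symm _ _)).trans (hpw x rfl).symm) (hC.not_isLit_output hf hij)
  rw [← eval_eq_val, ← eval_eq_val, hC, hC, hf] at this
  exact Bool.not_ne_self _ this

end

theorem Computes.restrict {f : (Fin (m + 1) → Bool) → Bool} {C : Circuit (m + 1)}
    (hC : C.Computes f) (i : Fin (m + 1)) (c : Bool) :
    (C.restrict i c).Computes fun y => f (i.insertNth c y) := fun y =>
  (eval_restrict C i c y).trans (hC _)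

theorem exists_restrict_size_add_three_le_of_isLit {f : (Fin (m + 2) → Bool) → Bool}
    {C : Circuit (m + 2)} (hf : FullySensitive f) (hC : C.Computes f) {p a b : ℕ}
    {w s t : Bool} {i j : Fin (m + 2)} (hreach : ReflTransGen C.Reads C.output p)
    (hp : C.Costly p) (hbin : C.IsBinary p a b w) (ha : C.IsLit i s a) (hb : C.IsLit j t b)
    (hij : i ≠ j) :
    ∃ (i : Fin (m + 2)) (c : Bool) (D : Circuit (m + 1)),
      D.Computes (fun y => f (i.insertNth c y)) ∧ D.size + 3 ≤ C.size := by
  obtain ⟨h, hhp, hh, r, s', hhr, hr⟩ := exists_costly_reads_isLit hf hC hbin hb hij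
  -- fixing `x i` so that the input `a` of `p` takes the controlling value `w`
  set D := C.restrict i (xor s w)
  have hconst : ∀ {q s'}, C.IsLit i s' q → D.IsConst q := fun hq =>
    ⟨_, fun y => by rw [val_restrict, hq.val_eq, Fin.insertNth_apply_same]⟩
  have hpc : D.IsConst p := ⟨w, fun y => by
    rw [val_restrict]; exact hbin.val_eq_of_val_left (by simp [ha.val_eq])⟩
  have hpe : D.Eliminable p :=
    ⟨by rwa [costly_restrict], a, by rw [reads_restrict]; exact hbin.reads_left, hconst ha⟩
  have hhe : D.Eliminable h := ⟨by rwa [costly_restrict], r, by rwa [reads_restrict], hconst hr⟩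
  obtain ⟨u, hu, hup, huh⟩ := D.exists_eliminable_ne_ne
    ((hC.restrict i _).not_isConst_output (hf.restrict i _) 0) (by rwa [reads_restrict]) hpc
    (by rwa [reads_restrict]) (hconst hr)
    (by rw [reads_restrict]; exact fun hrp => hr.not_costly_of_reflTransGen hrp hp)
  obtain ⟨E, hE, hsize⟩ := D.exists_size_add_card_le {p, h, u} (by simp [*])
  refine ⟨i, xor s w, E, fun y => (hE y).trans (hC.restrict i _ y), ?_⟩
  rw [Finset.card_insert_of_notMem (by simp [hhp.symm, hup.symm]),
    Finset.card_pair huh.symm, size_restrict] at hsize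
  exact hsize

theorem exists_restrict_size_add_three_le {f : (Fin (m + 2) → Bool) → Bool}
    {C : Circuit (m + 2)} (hf : FullySensitive f) (hC : C.Computes f)
    (hmin : ∀ D : Circuit (m + 2), D.Computes f → C.size ≤ D.size) :
    ∃ (i : Fin (m + 2)) (c : Bool) (D : Circuit (m + 1)),
      D.Computes (fun y => f (i.insertNth c y)) ∧ D.size + 3 ≤ C.size := by
  have hred : ∀ p, C.Costly p → ¬ C.Redundant p := fun p hp hr => by
    obtain ⟨D, hD, hsize, -⟩ := hp.exists_of_redundant hr
    have := hmin D fun x => (hD x).trans (hC x)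
    omega
  have hlit : ∀ i s, ¬ C.IsLit i s C.output := fun i s =>
    have ⟨j, hj⟩ := exists_ne i
    hC.not_isLit_output hf hj.symm s
  obtain ⟨p, hreach, hp, hin⟩ :=
    C.exists_costly_forall_reads_isConst_or_isLit (hC.not_isConst_output hf 0) hlit
  obtain ⟨a, b, w, hbin⟩ := hp.exists_isBinary
  rcases hin a hbin.reads_left with ha | ⟨i, s, ha⟩
  · exact absurd (hbin.redundant_of_isConst_left ha) (hred p hp)
  rcases hin b hbin.reads_right with hb | ⟨j, t, hb⟩
  · exact absurd (hbin.symm.redundant_of_isConst_left hb) (hred p hp)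
  obtain rfl | hij := eq_or_ne i j
  · exact absurd (hbin.redundant_of_isLit ha hb) (hred p hp)
  exact exists_restrict_size_add_three_le_of_isLit hf hC hreach hp hbin ha hb hij

end Circuit

theorem CC_le_size {n : ℕ} {f : (Fin n → Bool) → Bool} {C : Circuit n} (hC : C.Computes f) :
    CC n f ≤ C.size :=
  Nat.sInf_le ⟨C, hC, rfl⟩

theorem exists_size_eq_CC {n : ℕ} {f : (Fin n → Bool) → Bool} {C : Circuit n}
    (hC : C.Computes f) : ∃ C₀ : Circuit n, C₀.Computes f ∧ C₀.size = CC n f :=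
  Nat.sInf_mem (s := {s | ∃ C : Circuit n, C.Computes f ∧ C.size = s}) ⟨C.size, C, hC, rfl⟩

theorem FullySensitive.three_mul_le_size :
    ∀ {m : ℕ} {f : (Fin (m + 1) → Bool) → Bool}, FullySensitive f →
      ∀ {C : Circuit (m + 1)}, C.Computes f → 3 * m ≤ C.size
  | 0, _, _, _, _ => by simp
  | m + 1, f, hf, C, hC => by
    obtain ⟨C₀, hC₀, hsize⟩ := exists_size_eq_CC hC
    have hmin : ∀ D : Circuit (m + 2), D.Computes f → C₀.size ≤ D.size := fun D hD =>
      hsize ▸ CC_le_size hD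
    obtain ⟨i, c, D, hD, hD3⟩ := Circuit.exists_restrict_size_add_three_le hf hC₀ hmin
    have := (hf.restrict i c).three_mul_le_size hD
    have := hmin C hC
    omega

namespace Circuit

variable {n : ℕ}

def const (n : ℕ) (b : Bool) : Circuit n where
  gates := [.const b]
  output := ⟨0, by simp⟩
  wf q g hg r hr := by
    obtain ⟨-, rfl⟩ : q = 0 ∧ Gate.const b = g := by simpa [List.getElem?_cons] using hg
    simp [Gate.refs] at hr

theorem eval_const (b : Bool) (x : Fin n → Bool) : (const n b).eval x = b :=
  val_eq_eval (const n b) x (q := 0) (g := .const b) rfl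

def snoc (C : Circuit n) (g : Gate n) (hg : ∀ r ∈ g.refs, r < C.gates.length) : Circuit n where
  gates := C.gates ++ [g]
  output := ⟨C.gates.length, by simp⟩
  wf q g' hg' r hr := by
    rcases lt_or_ge q C.gates.length with hq | hq
    · exact C.wf q g' (by rwa [List.getElem?_append_left hq] at hg') r hr
    · obtain ⟨-, rfl⟩ : q ≤ C.gates.length ∧ g = g' := by
        simpa [List.getElem?_append_right hq, List.getElem?_singleton, Nat.sub_eq_zero_iff_le]
          using hg'
      exact (hg r hr).trans_le hq

variable {C : Circuit n} {g : Gate n} {hg : ∀ r ∈ g.refs, r < C.gates.length}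

@[simp] theorem length_snoc : (C.snoc g hg).gates.length = C.gates.length + 1 := by
  simp [snoc]

theorem evalList_snoc (x : Fin n → Bool) :
    (C.snoc g hg).evalList x = C.evalList x ++ [g.val x (C.evalList x)] := by
  simp [evalList, snoc, List.foldl_append]

theorem val_snoc_of_lt (x : Fin n → Bool) {q : ℕ} (hq : q < C.gates.length) :
    (C.snoc g hg).val x q = C.val x q := by
  rw [val, evalList_snoc, List.getD_append _ _ _ _ (by simpa using hq)]
  rfl

@[simp] theorem val_snoc (x : Fin n → Bool) (q : ℕ) :
    (C.snoc g hg).val x q = if q < C.gates.length then C.val x q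
      else if q = C.gates.length then g.eval x (C.val x) else false := by
  split_ifs with hq hq'
  · exact val_snoc_of_lt x hq
  · subst hq'
    rw [val_eq_eval _ x (g := g) (by simp [snoc])]
    exact Gate.eval_congr fun r hr => val_snoc_of_lt x (hg r hr)
  · exact val_of_length_le _ x (by simp; omega)

theorem eval_snoc (x : Fin n → Bool) : (C.snoc g hg).eval x = g.eval x (C.val x) :=
  (val_snoc x C.gates.length).trans (by simp)

/-- Appends gates computing `x i ⊕ C.eval x` as `(o ∨ xᵢ) ∧ ¬(o ∧ xᵢ)`. -/
def xorInput (C : Circuit n) (i : Fin n) : Circuit n :=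
  have ho := C.output.isLt
  ((((C.snoc (.inp i) fun r hr => by simp [Gate.refs] at hr).snoc
    (.or C.output C.gates.length) fun r hr => by simp [Gate.refs] at hr; simp; omega).snoc
    (.and C.output C.gates.length) fun r hr => by simp [Gate.refs] at hr; simp; omega).snoc
    (.not (C.gates.length + 2)) fun r hr => by simp [Gate.refs] at hr; simp; omega).snoc
    (.and (C.gates.length + 1) (C.gates.length + 3)) fun r hr => by
      simp [Gate.refs] at hr; simp; omega

theorem eval_xorInput (C : Circuit n) (i : Fin n) (x : Fin n → Bool) :
    (C.xorInput i).eval x = xor (x i) (C.eval x) := by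
  have ho := C.output.isLt
  simp only [xorInput, eval_snoc]
  simp [Gate.eval, ho, eval_eq_val]
  cases x i <;> cases C.val x C.output <;> rfl

end Circuit

theorem exists_computes_XORf (n : ℕ) : ∃ C : Circuit n, C.Computes (XORf n) := by
  suffices ∀ s : Finset (Fin n), ∃ C : Circuit n,
      C.Computes fun x => XORf n fun j => decide (j ∈ s) && x j by
    simpa using this Finset.univ
  intro s
  induction s using Finset.induction_on with
  | empty => exact ⟨Circuit.const n false, fun x => by simp [Circuit.eval_const, XORf]⟩
  | insert i s hi ih =>
    obtain ⟨C, hC⟩ := ih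
    refine ⟨C.xorInput i, fun x => ?_⟩
    have hupd : (fun j => decide (j ∈ insert i s) && x j) =
        update (fun j => decide (j ∈ s) && x j) i (x i) := by
      ext j
      rcases eq_or_ne j i with rfl | hj <;> simp [*]
    rw [Circuit.eval_xorInput, hC]
    dsimp only
    rw [hupd, (fullySensitive_XORf n).apply_update]
    simp [hi]

/-- Schnorr's lower bound: for every `n ≥ 1`, every DeMorgan circuit
computing `XOR_n` has at least `3(n-1)` binary gates; that is, `CC(XOR_n) ≥ 3(n-1)`. -/
theorem schnorr_lower_bound :
    ∀ n : ℕ, 1 ≤ n →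
      (∀ C : Circuit n, C.Computes (XORf n) → 3 * (n - 1) ≤ C.size) ∧
      3 * (n - 1) ≤ CC n (XORf n) := by
  rintro (_ | m) hn
  · omega
  have hsize : ∀ C : Circuit (m + 1), C.Computes (XORf (m + 1)) → 3 * m ≤ C.size :=
    fun _ => (fullySensitive_XORf (m + 1)).three_mul_le_size
  obtain ⟨C, hC⟩ := exists_computes_XORf (m + 1)
  obtain ⟨C₀, hC₀, hCC⟩ := exists_size_eq_CC hC
  exact ⟨hsize, hCC ▸ hsize C₀ hC₀⟩
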